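/- arXiv:2104.14789 — 4 statements merged into one kernel-verified Lean document; each statement's English description precedes it below -/
import Mathlib

section
/- Given a well-behaved ternary satisfaction relation ⊨³ for a ground program P, the operator A(X,Y) = (A¹(X,Y), A²(X,Y)), where A¹(X,Y) = {H(r) | r ∈ P, (X,Y) ⊨³ B(r)} and A²(X,Y) = ⋃_{Z ∈ [X,Y]} T_P(Z) (with T_P the two-valued immediate consequence operator), is an approximating operator for T_P: it is ≤_p-monotone and A(X,X) = (T_P(X), T_P(X)) for all X. -/
/-- A ground rule: atomic head and a body formula of type `F`. -/
structure Rule (α F : Type*) where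
  head : α
  body : F

/-- Two-valued immediate consequence operator. -/
def TP {α F : Type*} (sat : Set α → F → Prop) (P : Set (Rule α F)) (Z : Set α) : Set α :=
  { a | ∃ r ∈ P, r.head = a ∧ sat Z r.body }

/-- First component of the approximator induced by a ternary satisfaction relation. -/
def A1 {α F : Type*} (sat3 : Set α → Set α → F → Prop) (P : Set (Rule α F))
    (X Y : Set α) : Set α :=
  { a | ∃ r ∈ P, r.head = a ∧ sat3 X Y r.body }

/-- Second component: the union of `T_P(Z)` over `Z ∈ [X,Y]`. -/
def A2 {α F : Type*} (sat : Set α → F → Prop) (P : Set (Rule α F))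
    (X Y : Set α) : Set α :=
  ⋃ Z ∈ { Z : Set α | X ⊆ Z ∧ Z ⊆ Y }, TP sat P Z

/-- Given a well-behaved ternary satisfaction relation `⊨³`, the operator
`A(X,Y) = (A¹(X,Y), A²(X,Y))` is an approximating operator for `T_P`:
it is `≤_p`-monotone and agrees with `T_P` on exact pairs. -/
theorem induced_operator_approximates {α F : Type*}
    (sat : Set α → F → Prop) (sat3 : Set α → Set α → F → Prop) (P : Set (Rule α F))
    (hexact : ∀ (X : Set α) (φ : F), sat3 X X φ ↔ sat X φ)
    (hmono : ∀ (X Y X' Y' : Set α) (φ : F),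
      X ⊆ X' → Y' ⊆ Y → sat3 X Y φ → sat3 X' Y' φ) :
    (∀ (X Y X' Y' : Set α), X ⊆ X' → Y' ⊆ Y →
      A1 sat3 P X Y ⊆ A1 sat3 P X' Y' ∧ A2 sat P X' Y' ⊆ A2 sat P X Y) ∧
    (∀ X : Set α, A1 sat3 P X X = TP sat P X ∧ A2 sat P X X = TP sat P X) := by
  constructor
  · intro X Y X' Y' hX hY
    constructor
    · rintro a ⟨r, hr, hh, hs⟩
      exact ⟨r, hr, hh, hmono X Y X' Y' r.body hX hY hs⟩
    · rintro a ha
      simp only [A2, Set.mem_iUnion] at ha ⊢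
      obtain ⟨Z, ⟨hZ1, hZ2⟩, hz⟩ := ha
      exact ⟨Z, ⟨hX.trans hZ1, hZ2.trans hY⟩, hz⟩
  · intro X
    constructor
    · ext a
      simp only [A1, TP, Set.mem_setOf_eq, hexact]
    · ext a
      simp only [A2, TP, Set.mem_iUnion, Set.mem_setOf_eq]
      constructor
      · rintro ⟨Z, ⟨h1, h2⟩, h⟩
        have : Z = X := h2.antisymm h1
        subst this; exact h
      · intro h; exact ⟨X, ⟨le_refl _, le_refl _⟩, h⟩
end

section
/- For convex aggregate atoms, the relation ⊨_MR is ≤_p-monotone: if A is convex, (X,Y) ≤_p (X',Y') (i.e., X ⊆ X' and Y' ⊆ Y), X ⊆ Y, X' ⊆ Y', and (X,Y) ⊨_MR A, then (X',Y') ⊨_MR A. -/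
/-- The Marek-Remmel ternary satisfaction relation for aggregate atoms. -/
def mrSat {α β : Type*} (sat : Set α → β → Prop) (J I : Set α) (A : β) : Prop :=
  sat I A ∧ ∃ Z : Set α, Z ⊆ J ∧ sat Z A

/-- Convexity of an aggregate atom. -/
def ConvexAgg {α β : Type*} (sat : Set α → β → Prop) (A : β) : Prop :=
  ∀ X Y Z : Set α, X ⊆ Y → Y ⊆ Z → sat X A → sat Z A → sat Y A

/-- For convex aggregate atoms, `⊨_MR` is `≤_p`-monotone. -/
theorem mrSat_lep_monotone_of_convex {α β : Type*} (sat : Set α → β → Prop)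
    (A : β) (hconv : ConvexAgg sat A)
    (X Y X' Y' : Set α) (h1 : X ⊆ X') (h2 : Y' ⊆ Y) (hXY : X ⊆ Y) (hXY' : X' ⊆ Y')
    (h : mrSat sat X Y A) : mrSat sat X' Y' A := by
  obtain ⟨hY, Z, hZX, hZ⟩ := h
  exact ⟨hconv Z Y' Y (hZX.trans (h1.trans hXY')) h2 hZ hY,
    Z, hZX.trans h1, hZ⟩
end

section
/- For convex aggregate atoms, the relations ⊨_MR and ⊨_ult coincide on consistent pairs: if A is convex and X ⊆ Y, then (X,Y) ⊨_MR A iff (X,Y) ⊨_ult A, where (X,Y) ⊨_MR A means Y ⊨ A and ∃Z ⊆ X with Z ⊨ A, and (X,Y) ⊨_ult A means Z ⊨ A for every Z with X ⊆ Z ⊆ Y. -/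
/-- The ultimate ternary satisfaction relation. -/
def ultSat {α β : Type*} (sat : Set α → β → Prop) (J I : Set α) (A : β) : Prop :=
  ∀ Z : Set α, J ⊆ Z → Z ⊆ I → sat Z A

/-- For convex aggregate atoms, `⊨_MR` and `⊨_ult` coincide on consistent pairs. -/
theorem mrSat_iff_ultSat_of_convex {α β : Type*} (sat : Set α → β → Prop)
    (A : β) (hconv : ConvexAgg sat A) (X Y : Set α) (hXY : X ⊆ Y) :
    mrSat sat X Y A ↔ ultSat sat X Y A := by
  constructor
  · rintro ⟨hY, W, hWX, hW⟩ Z hXZ hZY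
    exact hconv W Z Y (hWX.trans hXZ) hZY hW hY
  · intro h
    exact ⟨h Y hXY le_rfl, X, le_rfl, h X le_rfl hXY⟩
end

section
/- The ultimate approximator is the most precise approximator: if A is any ≤_p-monotone operator on pairs over a complete lattice L that extends an operator O (i.e., A(x,x) = (O(x),O(x)) for all x), then for every consistent pair (x,y) (x ≤ y), A(x,y) ≤_p U_O(x,y), where U_O(x,y) = (glb{O(z) | x ≤ z ≤ y}, lub{O(z) | x ≤ z ≤ y}). -/
/-- The ultimate approximator of an operator `O` on a complete lattice. -/
def ultimateApprox {L : Type*} [CompleteLattice L] (O : L → L) (x y : L) : L × L :=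
  (sInf { w | ∃ z, x ≤ z ∧ z ≤ y ∧ w = O z }, sSup { w | ∃ z, x ≤ z ∧ z ≤ y ∧ w = O z })

/-- The ultimate approximator is the most precise approximator: any `≤_p`-monotone
operator `A` extending `O` satisfies `A(x,y) ≤_p U_O(x,y)` on consistent pairs. -/
theorem ultimate_most_precise {L : Type*} [CompleteLattice L]
    (O : L → L) (A : L → L → L × L)
    (hmono : ∀ x y x' y' : L, x ≤ x' → y' ≤ y →
      (A x y).1 ≤ (A x' y').1 ∧ (A x' y').2 ≤ (A x y).2)
    (hext : ∀ x : L, A x x = (O x, O x))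
    (x y : L) (hxy : x ≤ y) :
    (A x y).1 ≤ (ultimateApprox O x y).1 ∧ (ultimateApprox O x y).2 ≤ (A x y).2 := by
  constructor
  · apply le_sInf
    rintro w ⟨z, hxz, hzy, rfl⟩
    have h := hmono x y z z hxz hzy
    have := h.1
    rwa [hext z] at this
  · apply sSup_le
    rintro w ⟨z, hxz, hzy, rfl⟩
    have h := hmono x y z z hxz hzy
    have := h.2
    rwa [hext z] at this
end
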